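/- arXiv:2012.14189 — 2 statements merged into one kernel-verified Lean document; each statement's English description precedes it below -/
import Mathlib

section
/- Let 0 ≤ k ≤ n be integers, α,β,γ > -1 real, and (x,y) with x > 0, y > 0, x+y < 1. Then ∂ⁿ/∂xᵏ∂y^{n-k} [x^{k+α} y^{n-k+β} (1-x-y)^{n+γ}] = x^α y^β (1-x-y)^γ · (α+1)_k (β+1)_{n-k} · Σ_{i=0}^{k} Σ_{j=0}^{n-k} [(-γ-n)_{i+j} (-k)_i (k-n)_j / ((α+1)_i (β+1)_j i! j!)] · (-1)^{i+j} x^i y^j (1-x-y)^{n-i-j}. In particular the function [x^α y^β (1-x-y)^γ]^{-1} ∂ⁿ/∂xᵏ∂y^{n-k}[x^{k+α} y^{n-k+β}(1-x-y)^{n+γ}] is a polynomial in (x,y) of total degree at most n. -/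
/-!
Apply the Leibniz rule first in `y` and then in `x`. If the factor `(1 - x - y)^(n + γ)` absorbs
`j` derivatives in `y` and `i` in `x`, it contributes the falling factorial `(n + γ)↓(i + j)`,
while `x^(k + α)` and `y^(n - k + β)` contribute `(k + α)↓(k - i)` and `(n - k + β)↓(n - k - j)`
and leave `x^(α + i)` and `y^(β + j)`. The coefficients become the stated Pochhammer
quotients through `(-a)_m = (-1)^m a↓m` and `(a + 1)_k = (a + 1)_i (k + a)↓(k - i)`.
-/

open Real

/-- The Pochhammer symbol `(a)_k = a(a+1)⋯(a+k-1) = Γ(a+k)/Γ(a)`. -/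
noncomputable def poch (a : ℝ) (k : ℕ) : ℝ := ∏ i ∈ Finset.range k, (a + (i : ℝ))

/-- Iterated partial derivative `∂^{k+l}/∂x^k ∂y^l` of a two-variable function. -/
noncomputable def pderiv2 (k l : ℕ) (f : ℝ → ℝ → ℝ) (x y : ℝ) : ℝ :=
  iteratedDeriv k (fun s => iteratedDeriv l (fun t => f s t) y) x

open Finset

lemma poch_eq_ascPochhammer_eval (a : ℝ) (k : ℕ) : poch a k = (ascPochhammer ℝ k).eval a := by
  induction k with
  | zero => simp [poch]
  | succ k ih => rw [poch, prod_range_succ, ← poch, ih, ascPochhammer_succ_eval]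

lemma poch_pos {a : ℝ} (ha : 0 < a) (k : ℕ) : 0 < poch a k :=
  prod_pos fun _ _ => by positivity

lemma poch_neg (r : ℝ) (k : ℕ) : poch (-r) k = (-1) ^ k * (descPochhammer ℝ k).eval r := by
  rw [poch_eq_ascPochhammer_eval, ascPochhammer_eval_neg_eq_descPochhammer]

lemma poch_neg_natCast (k i : ℕ) : poch (-(k : ℝ)) i = (-1) ^ i * (i.factorial * k.choose i) := by
  rw [poch_neg, descPochhammer_eval_eq_descFactorial, Nat.descFactorial_eq_factorial_mul_choose,
    Nat.cast_mul]

lemma poch_mul_descPochhammer_eval (a : ℝ) {i k : ℕ} (hik : i ≤ k) :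
    poch (a + 1) i * (descPochhammer ℝ (k - i)).eval (k + a) = poch (a + 1) k := by
  have h := congrArg (Polynomial.eval (a + 1)) (ascPochhammer_mul ℝ i (k - i))
  rw [Nat.add_sub_cancel' hik] at h
  rw [poch_eq_ascPochhammer_eval, poch_eq_ascPochhammer_eval, ← h, Polynomial.eval_mul,
    Polynomial.eval_comp, descPochhammer_eval_eq_ascPochhammer, Nat.cast_sub hik]
  simp only [Polynomial.eval_add, Polynomial.eval_X, Polynomial.eval_natCast]
  ring_nf

lemma descPochhammer_eval_mul_eval_sub {R : Type*} [CommRing R] (r : R) (m n : ℕ) :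
    (descPochhammer R m).eval r * (descPochhammer R n).eval (r - m) =
      (descPochhammer R (m + n)).eval r := by
  rw [← descPochhammer_mul, Polynomial.eval_mul, Polynomial.eval_comp]
  simp

lemma iteratedDeriv_rpow_const (a x : ℝ) (m : ℕ) :
    iteratedDeriv m (fun t : ℝ => t ^ a) x = (descPochhammer ℝ m).eval a * x ^ (a - m) := by
  rw [iteratedDeriv_eq_iterate, iter_deriv_rpow_const]

lemma iteratedDeriv_const_sub_rpow (c A x : ℝ) (m : ℕ) :
    iteratedDeriv m (fun t : ℝ => (c - t) ^ A) x
      = (-1) ^ m * (descPochhammer ℝ m).eval A * (c - x) ^ (A - m) := by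
  rw [iteratedDeriv_comp_const_sub (f := fun t : ℝ => t ^ A)]
  dsimp only
  rw [iteratedDeriv_rpow_const, smul_eq_mul, mul_assoc]

lemma contDiffAt_const_sub_rpow_mul_rpow {c A a t : ℝ} (ht : t ∈ Set.Ioo 0 c) (m : ℕ∞) :
    ContDiffAt ℝ m (fun t : ℝ => (c - t) ^ A * t ^ a) t :=
  ((contDiffAt_rpow_const_of_ne (sub_pos.2 ht.2).ne').comp t
    (contDiffAt_const.sub contDiffAt_id)).mul (contDiffAt_rpow_const_of_ne ht.1.ne')

lemma iteratedDeriv_const_sub_rpow_mul_rpow {c A a t : ℝ} (ht : t ∈ Set.Ioo 0 c) (m : ℕ) :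
    iteratedDeriv m (fun t : ℝ => (c - t) ^ A * t ^ a) t
      = ∑ j ∈ range (m + 1), (m.choose j : ℝ) *
          ((-1) ^ j * (descPochhammer ℝ j).eval A * (c - t) ^ (A - j)) *
          ((descPochhammer ℝ (m - j)).eval a * t ^ (a - (m - j : ℕ))) := by
  have hA : ContDiffAt ℝ m (fun t : ℝ => (c - t) ^ A) t :=
    (contDiffAt_rpow_const_of_ne (sub_pos.2 ht.2).ne').comp t (contDiffAt_const.sub contDiffAt_id)
  have ha : ContDiffAt ℝ m (fun t : ℝ => t ^ a) t := contDiffAt_rpow_const_of_ne ht.1.ne'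
  rw [iteratedDeriv_fun_mul hA ha]
  simp only [iteratedDeriv_const_sub_rpow, iteratedDeriv_rpow_const]

theorem pderiv2_rpow_mul_rpow_mul_one_sub_rpow (k l : ℕ) (a b A : ℝ) {x y : ℝ}
    (hx : 0 < x) (hy : 0 < y) (hxy : x + y < 1) :
    pderiv2 k l (fun u v => u ^ a * v ^ b * (1 - u - v) ^ A) x y
      = ∑ i ∈ range (k + 1), ∑ j ∈ range (l + 1),
          (k.choose i : ℝ) * l.choose j * (-1) ^ (i + j) * (descPochhammer ℝ (i + j)).eval A *
            (descPochhammer ℝ (k - i)).eval a * (descPochhammer ℝ (l - j)).eval b *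
            (x ^ (a - (k - i : ℕ)) * y ^ (b - (l - j : ℕ)) * (1 - x - y) ^ (A - (i + j : ℕ))) := by
  set K : ℕ → ℝ := fun j => (l.choose j : ℝ) * ((-1) ^ j * (descPochhammer ℝ j).eval A) *
    ((descPochhammer ℝ (l - j)).eval b * y ^ (b - (l - j : ℕ)))
  have hinner : ∀ s ∈ Set.Ioo 0 (1 - y),
      iteratedDeriv l (fun t => s ^ a * t ^ b * (1 - s - t) ^ A) y
        = ∑ j ∈ range (l + 1), K j * ((1 - y - s) ^ (A - j) * s ^ a) := by
    intro s hs
    have hy' : y ∈ Set.Ioo 0 (1 - s) := ⟨hy, by linarith [hs.2]⟩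
    rw [show (fun t => s ^ a * t ^ b * (1 - s - t) ^ A) =
        fun t => s ^ a * ((1 - s - t) ^ A * t ^ b) by funext t; ring,
      iteratedDeriv_const_mul_field, iteratedDeriv_const_sub_rpow_mul_rpow hy', mul_sum]
    refine sum_congr rfl fun j _ => ?_
    rw [show 1 - s - y = 1 - y - s by ring]
    ring
  have hx' : x ∈ Set.Ioo 0 (1 - y) := ⟨hx, by linarith⟩
  have houter : pderiv2 k l (fun u v => u ^ a * v ^ b * (1 - u - v) ^ A) x y
      = ∑ j ∈ range (l + 1), K j *
          iteratedDeriv k (fun s => (1 - y - s) ^ (A - j) * s ^ a) x := by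
    rw [pderiv2, Filter.EventuallyEq.iteratedDeriv_eq k
      (Filter.eventually_of_mem (isOpen_Ioo.mem_nhds hx') hinner),
      iteratedDeriv_fun_sum (f := fun j s => K j * ((1 - y - s) ^ (A - j) * s ^ a))
        fun j _ => contDiffAt_const.mul (contDiffAt_const_sub_rpow_mul_rpow hx' k)]
    simp only [iteratedDeriv_const_mul_field]
  rw [houter, sum_comm]
  refine sum_congr rfl fun j _ => ?_
  rw [iteratedDeriv_const_sub_rpow_mul_rpow hx', mul_sum]
  refine sum_congr rfl fun i _ => ?_
  rw [show 1 - y - x = 1 - x - y by ring,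
    show A - (j : ℝ) - i = A - (i + j : ℕ) by push_cast; ring,
    ← add_comm j i, ← descPochhammer_eval_mul_eval_sub, pow_add]
  ring

lemma rpow_natCast_add_sub_natCast {x : ℝ} (hx : 0 < x) (a : ℝ) {i m : ℕ} (him : i ≤ m) :
    x ^ ((m : ℝ) + a - i) = x ^ a * x ^ (m - i) := by
  rw [show (m : ℝ) + a - i = a + (m - i : ℕ) by push_cast [him]; ring, rpow_add hx, rpow_natCast]

lemma choose_mul_descPochhammer_eq_poch {α β : ℝ} (hα : -1 < α) (hβ : -1 < β) (γ : ℝ)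
    {i j k l : ℕ} (hik : i ≤ k) (hjl : j ≤ l) :
    (k.choose i : ℝ) * l.choose j * (-1) ^ (i + j) *
        (descPochhammer ℝ (i + j)).eval ((k + l : ℕ) + γ) *
        (descPochhammer ℝ (k - i)).eval (k + α) * (descPochhammer ℝ (l - j)).eval (l + β)
      = poch (α + 1) k * poch (β + 1) l *
        (poch (-γ - (k + l : ℕ)) (i + j) * poch (-(k : ℝ)) i * poch (-(l : ℝ)) j /
          (poch (α + 1) i * poch (β + 1) j * i.factorial * j.factorial)) * (-1) ^ (i + j) := by
  have hpα : poch (α + 1) i ≠ 0 := (poch_pos (by linarith) i).ne'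
  have hpβ : poch (β + 1) j ≠ 0 := (poch_pos (by linarith) j).ne'
  rw [← poch_mul_descPochhammer_eval α hik, ← poch_mul_descPochhammer_eval β hjl,
    show -γ - ((k + l : ℕ) : ℝ) = -((k + l : ℕ) + γ) by ring, poch_neg, poch_neg_natCast,
    poch_neg_natCast]
  field_simp
  ring_nf
  simp only [pow_mul', neg_one_sq, one_pow, mul_one]

theorem pderiv2_rodrigues_eq_sum (k n : ℕ) (hkn : k ≤ n) {α β : ℝ} (hα : -1 < α) (hβ : -1 < β)
    (γ : ℝ) {x y : ℝ} (hx : 0 < x) (hy : 0 < y) (hxy : x + y < 1) :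
    pderiv2 k (n - k) (fun u v =>
        u ^ ((k : ℝ) + α) * v ^ ((n : ℝ) - (k : ℝ) + β) * (1 - u - v) ^ ((n : ℝ) + γ)) x y
      = x ^ α * y ^ β * (1 - x - y) ^ γ * (poch (α + 1) k * poch (β + 1) (n - k)) *
        ∑ i ∈ Finset.range (k + 1), ∑ j ∈ Finset.range (n - k + 1),
          (poch (-γ - (n : ℝ)) (i + j) * poch (-(k : ℝ)) i * poch ((k : ℝ) - (n : ℝ)) j /
            (poch (α + 1) i * poch (β + 1) j * (Nat.factorial i : ℝ) * (Nat.factorial j : ℝ))) *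
          ((-1 : ℝ) ^ (i + j) * x ^ i * y ^ j * (1 - x - y) ^ (n - i - j)) := by
  obtain ⟨l, rfl⟩ := Nat.exists_eq_add_of_le hkn
  have hz : 0 < 1 - x - y := by linarith
  rw [Nat.add_sub_cancel_left, show ((k + l : ℕ) : ℝ) - k + β = l + β by push_cast; ring,
    show (k : ℝ) - (k + l : ℕ) = -l by push_cast; ring,
    pderiv2_rpow_mul_rpow_mul_one_sub_rpow k l _ _ _ hx hy hxy, mul_sum]
  refine sum_congr rfl fun i hi => ?_
  rw [mul_sum]
  refine sum_congr rfl fun j hj => ?_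
  have hik : i ≤ k := Nat.lt_succ_iff.mp (mem_range.mp hi)
  have hjl : j ≤ l := Nat.lt_succ_iff.mp (mem_range.mp hj)
  rw [rpow_natCast_add_sub_natCast hx α (Nat.sub_le k i),
    rpow_natCast_add_sub_natCast hy β (Nat.sub_le l j),
    rpow_natCast_add_sub_natCast hz γ (show i + j ≤ k + l by omega),
    Nat.sub_sub_self hik, Nat.sub_sub_self hjl, Nat.sub_sub,
    choose_mul_descPochhammer_eq_poch hα hβ γ hik hjl]
  ring

open MvPolynomial in
lemma exists_totalDegree_le_eval_eq_sum (n : ℕ) (I J : Finset ℕ)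
    (hIJ : ∀ i ∈ I, ∀ j ∈ J, i + j ≤ n) (c : ℕ → ℕ → ℝ) :
    ∃ P : MvPolynomial (Fin 2) ℝ, P.totalDegree ≤ n ∧ ∀ x y : ℝ,
      MvPolynomial.eval ![x, y] P
        = ∑ i ∈ I, ∑ j ∈ J, c i j * (x ^ i * y ^ j * (1 - x - y) ^ (n - i - j)) := by
  refine ⟨∑ i ∈ I, ∑ j ∈ J, C (c i j) * (X 0 ^ i * X 1 ^ j * (1 - X 0 - X 1) ^ (n - i - j)),
    totalDegree_finsetSum_le fun i hi => totalDegree_finsetSum_le fun j hj => ?_, fun x y => ?_⟩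
  · have h1 : (1 - X 0 - X 1 : MvPolynomial (Fin 2) ℝ).totalDegree ≤ 1 := by
      refine (totalDegree_sub _ _).trans
        (max_le ((totalDegree_sub _ _).trans (max_le ?_ ?_)) ?_) <;> simp
    calc _ ≤ 0 + ((i * 1 + j * 1) + (n - i - j) * 1) := by
          refine (totalDegree_mul _ _).trans (add_le_add (totalDegree_C _).le ?_)
          refine (totalDegree_mul _ _).trans (add_le_add ((totalDegree_mul _ _).trans
            (add_le_add ?_ ?_)) ((totalDegree_pow _ _).trans (Nat.mul_le_mul_left _ h1)))
          all_goals exact (totalDegree_pow _ _).trans (by simp)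
      _ ≤ n := by have := hIJ i hi j hj; omega
  · simp

theorem stmt1_general (k n : ℕ) (hkn : k ≤ n) (α β γ : ℝ)
    (hα : -1 < α) (hβ : -1 < β)
    (x y : ℝ) (hx : 0 < x) (hy : 0 < y) (hxy : x + y < 1) :
    (pderiv2 k (n - k) (fun u v =>
        u ^ ((k : ℝ) + α) * v ^ ((n : ℝ) - (k : ℝ) + β) * (1 - u - v) ^ ((n : ℝ) + γ)) x y
      = x ^ α * y ^ β * (1 - x - y) ^ γ * (poch (α + 1) k * poch (β + 1) (n - k)) *
        ∑ i ∈ Finset.range (k + 1), ∑ j ∈ Finset.range (n - k + 1),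
          (poch (-γ - (n : ℝ)) (i + j) * poch (-(k : ℝ)) i * poch ((k : ℝ) - (n : ℝ)) j /
            (poch (α + 1) i * poch (β + 1) j * (Nat.factorial i : ℝ) * (Nat.factorial j : ℝ))) *
          ((-1 : ℝ) ^ (i + j) * x ^ i * y ^ j * (1 - x - y) ^ (n - i - j)))
    ∧ ∃ P : MvPolynomial (Fin 2) ℝ, P.totalDegree ≤ n ∧
        ∀ x' y' : ℝ, 0 < x' → 0 < y' → x' + y' < 1 →
          (x' ^ α * y' ^ β * (1 - x' - y') ^ γ)⁻¹ *
            pderiv2 k (n - k) (fun u v =>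
              u ^ ((k : ℝ) + α) * v ^ ((n : ℝ) - (k : ℝ) + β) *
                (1 - u - v) ^ ((n : ℝ) + γ)) x' y'
          = MvPolynomial.eval ![x', y'] P := by
  refine ⟨pderiv2_rodrigues_eq_sum k n hkn hα hβ γ hx hy hxy, ?_⟩
  obtain ⟨P, hdeg, hP⟩ := exists_totalDegree_le_eval_eq_sum n (range (k + 1)) (range (n - k + 1))
    (fun i hi j hj => by rw [mem_range] at hi hj; omega)
    fun i j => poch (α + 1) k * poch (β + 1) (n - k) *
      (poch (-γ - n) (i + j) * poch (-(k : ℝ)) i * poch ((k : ℝ) - n) j /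
        (poch (α + 1) i * poch (β + 1) j * i.factorial * j.factorial)) * (-1) ^ (i + j)
  refine ⟨P, hdeg, fun x' y' hx' hy' hxy' => ?_⟩
  have hweight : x' ^ α * y' ^ β * (1 - x' - y') ^ γ ≠ 0 := by
    have : 0 < 1 - x' - y' := by linarith
    positivity
  rw [pderiv2_rodrigues_eq_sum k n hkn hα hβ γ hx' hy' hxy',
    mul_assoc (x' ^ α * y' ^ β * (1 - x' - y') ^ γ), inv_mul_cancel_left₀ hweight, hP, mul_sum]
  refine sum_congr rfl fun i _ => ?_
  rw [mul_sum]
  refine sum_congr rfl fun j _ => ?_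
  ring

/-- Explicit expansion of the Rodrigues-type derivative
`∂ⁿ/∂xᵏ∂y^{n-k} [x^{k+α} y^{n-k+β} (1-x-y)^{n+γ}]`, and the fact that after
division by the weight `x^α y^β (1-x-y)^γ` it is a polynomial of total degree
at most `n`. -/
theorem stmt1 (k n : ℕ) (hkn : k ≤ n) (α β γ : ℝ)
    (hα : -1 < α) (hβ : -1 < β) (hγ : -1 < γ)
    (x y : ℝ) (hx : 0 < x) (hy : 0 < y) (hxy : x + y < 1) :
    (pderiv2 k (n - k) (fun u v =>
        u ^ ((k : ℝ) + α) * v ^ ((n : ℝ) - (k : ℝ) + β) * (1 - u - v) ^ ((n : ℝ) + γ)) x y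
      = x ^ α * y ^ β * (1 - x - y) ^ γ * (poch (α + 1) k * poch (β + 1) (n - k)) *
        ∑ i ∈ Finset.range (k + 1), ∑ j ∈ Finset.range (n - k + 1),
          (poch (-γ - (n : ℝ)) (i + j) * poch (-(k : ℝ)) i * poch ((k : ℝ) - (n : ℝ)) j /
            (poch (α + 1) i * poch (β + 1) j * (Nat.factorial i : ℝ) * (Nat.factorial j : ℝ))) *
          ((-1 : ℝ) ^ (i + j) * x ^ i * y ^ j * (1 - x - y) ^ (n - i - j)))
    ∧ ∃ P : MvPolynomial (Fin 2) ℝ, P.totalDegree ≤ n ∧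
        ∀ x' y' : ℝ, 0 < x' → 0 < y' → x' + y' < 1 →
          (x' ^ α * y' ^ β * (1 - x' - y') ^ γ)⁻¹ *
            pderiv2 k (n - k) (fun u v =>
              u ^ ((k : ℝ) + α) * v ^ ((n : ℝ) - (k : ℝ) + β) *
                (1 - u - v) ^ ((n : ℝ) + γ)) x' y'
          = MvPolynomial.eval ![x', y'] P :=
  stmt1_general k n hkn α β γ hα hβ x y hx hy hxy
end

section
/- Let a,b,c,d > 0 and e < 1 be real, and let 0 < s < 1 and 1-s < t < 1. Writing the parameters explicitly, I₅(a,b,c,d,e; s,t) + I₆(a,b,c,d,e; s,t) = I₅(b,a,d,c,e; t,s) + I₆(b,a,d,c,e; t,s); i.e. the sum I₅ + I₆ is invariant under simultaneously interchanging a ↔ b, c ↔ d and s ↔ t. -/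
open Real intervalIntegral

/-- The Beta function `B(x,y) = Γ(x)Γ(y)/Γ(x+y)`. -/
noncomputable def Beta2 (x y : ℝ) : ℝ := Real.Gamma x * Real.Gamma y / Real.Gamma (x + y)

/-- Extended Beta function `B(x,y,z) = Γ(x)Γ(y)Γ(z)/Γ(x+y+z)`. -/
noncomputable def Beta3 (x y z : ℝ) : ℝ :=
  Real.Gamma x * Real.Gamma y * Real.Gamma z / Real.Gamma (x + y + z)

/-- Olsson's function
`F_P(a,b₁,b₂,c₁,c₂;x,y) = y^{-a} Σ_{i,j} (a)_{i+j}(a-c₂+1)_i(b₂)_j(b₁)_i /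
((a+b₂-c₂+1)_{i+j}(c₁)_i i! j!) xⁱ (1-y)ʲ`. -/
noncomputable def FP (a b₁ b₂ c₁ c₂ x y : ℝ) : ℝ :=
  y ^ (-a) *
    ∑' (i : ℕ) (j : ℕ),
      poch a (i + j) * poch (a - c₂ + 1) i * poch b₂ j * poch b₁ i /
        (poch (a + b₂ - c₂ + 1) (i + j) * poch c₁ i *
          (Nat.factorial i : ℝ) * (Nat.factorial j : ℝ)) * x ^ i * (1 - y) ^ j

/-- The extended `F₃` function
`F̃₃(a₁,a₂;b₁,b₂;c;d₁;d₂;x,y) = Σ_{i,j} (a₁)_i(a₂)_j(b₁)_i(b₂)_j(d₁)_i /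
((c)_{i+j}(d₂)_i i! j!) xⁱ yʲ`. -/
noncomputable def F3t (a₁ a₂ b₁ b₂ c d₁ d₂ x y : ℝ) : ℝ :=
  ∑' (i : ℕ) (j : ℕ),
    poch a₁ i * poch a₂ j * poch b₁ i * poch b₂ j * poch d₁ i /
      (poch c (i + j) * poch d₂ i * (Nat.factorial i : ℝ) * (Nat.factorial j : ℝ)) *
      x ^ i * y ^ j

/-- `I₅(s,t) = ∫₀^{1-s} (∫₀ˢ u^{a-1}(s-u)^{c-1}(1-u-v)^{-e} du)
v^{b-1}(t-v)^{d-1} dv`. -/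
noncomputable def I5 (a b c d e s t : ℝ) : ℝ :=
  ∫ v in (0:ℝ)..(1 - s),
    (∫ u in (0:ℝ)..s, u ^ (a - 1) * (s - u) ^ (c - 1) * (1 - u - v) ^ (-e)) *
      v ^ (b - 1) * (t - v) ^ (d - 1)

/-- `I₆(s,t) = ∫_{1-s}^{t} (∫₀^{1-v} u^{a-1}(s-u)^{c-1}(1-u-v)^{-e} du)
v^{b-1}(t-v)^{d-1} dv`. -/
noncomputable def I6 (a b c d e s t : ℝ) : ℝ :=
  ∫ v in (1 - s)..t,
    (∫ u in (0:ℝ)..(1 - v), u ^ (a - 1) * (s - u) ^ (c - 1) * (1 - u - v) ^ (-e)) *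
      v ^ (b - 1) * (t - v) ^ (d - 1)

/-! `I₅ + I₆` is the integral of
`K(u,v) = u^{a-1}(s-u)^{c-1}(1-u-v)^{-e} v^{b-1}(t-v)^{d-1}` over the region
`0 < u < s, 0 < v < t, u + v < 1`, sliced along `v` (the `u`-slice is `(0,s)` for `v ≤ 1-s` and
`(0,1-v)` beyond); the swapped sum is the same integral sliced along `u`, so the identity is
Fubini's theorem once `K` is integrable. Away from the line `u + v = 1`, `K` is dominated by a
product of two Beta densities. Near that line `u` and `v` stay away from `0`, and since `s + t > 1`
the point cannot be close to both `u = s` and `v = t`; so `K` is dominated by a Beta density in one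
variable times `(1-u-v)^{-e}`, which the shear `(u,v) ↦ (u, u+v)` turns into a product. -/

open MeasureTheory Set

lemma IsCompact.exists_nonneg_bound_of_continuousOn {X E : Type*} [TopologicalSpace X]
    [SeminormedAddGroup E] {K : Set X} {f : X → E} (hK : IsCompact K) (hf : ContinuousOn f K) :
    ∃ C, 0 ≤ C ∧ ∀ x ∈ K, ‖f x‖ ≤ C :=
  let ⟨C, hC⟩ := hK.exists_bound_of_continuousOn hf
  ⟨max C 0, le_max_right _ _, fun x hx => (hC x hx).trans (le_max_left _ _)⟩

lemma intervalIntegrable_sub_rpow {q : ℝ} (hq : -1 < q) (r a b : ℝ) :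
    IntervalIntegrable (fun x => (r - x) ^ q) volume a b := by
  simpa using
    (intervalIntegral.intervalIntegrable_rpow' hq (a := r - a) (b := r - b)).comp_sub_left r

namespace MeasureTheory

variable {L : Type*} [NormedRing L] {G : Type*} [MeasurableSpace G] [AddGroup G]
  [MeasurableAdd₂ G] {μ ν : Measure G} [SFinite μ] [SFinite ν] {f g : G → L}

lemma Integrable.mul_comp_add_left [ν.IsAddLeftInvariant] (hf : Integrable f μ)
    (hg : Integrable g ν) : Integrable (fun z : G × G => f z.1 * g (z.1 + z.2)) (μ.prod ν) :=
  ((measurePreserving_prod_add μ ν).integrable_comp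
    (hf.mul_prod hg).aestronglyMeasurable).2 (hf.mul_prod hg)

lemma Integrable.mul_comp_add_right [μ.IsAddRightInvariant] (hf : Integrable f ν)
    (hg : Integrable g μ) : Integrable (fun z : G × G => g (z.1 + z.2) * f z.2) (μ.prod ν) :=
  ((measurePreserving_add_prod μ ν).integrable_comp
    (hg.mul_prod hf).aestronglyMeasurable).2 (hg.mul_prod hf)

end MeasureTheory

noncomputable def betaWeight (p q r x : ℝ) : ℝ := x ^ p * (r - x) ^ q

lemma continuousOn_betaWeight (p q r : ℝ) : ContinuousOn (betaWeight p q r) (Ioo 0 r) :=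
  (continuousOn_id.rpow_const fun _ hx => Or.inl hx.1.ne').mul
    ((continuousOn_const.sub continuousOn_id).rpow_const fun _ hx => Or.inl (sub_pos.2 hx.2).ne')

lemma integrableOn_betaWeight {p q r : ℝ} (hp : -1 < p) (hq : -1 < q) :
    IntegrableOn (betaWeight p q r) (Ioo 0 r) := by
  rcases le_or_gt r 0 with hr | hr
  · simp [Ioo_eq_empty_of_le hr]
  obtain ⟨C₁, hC₁0, hC₁⟩ := isCompact_Icc.exists_nonneg_bound_of_continuousOn
    (ContinuousOn.rpow_const (f := fun x => r - x) (s := Icc 0 (r / 2)) (p := q) (by fun_prop)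
      fun x hx => Or.inl (by linarith [hx.2]))
  obtain ⟨C₂, hC₂0, hC₂⟩ := isCompact_Icc.exists_nonneg_bound_of_continuousOn
    (ContinuousOn.rpow_const (f := fun x => x) (s := Icc (r / 2) r) (p := p) (by fun_prop)
      fun x hx => Or.inl (by linarith [hx.1]))
  have hdom : IntegrableOn (fun x => C₁ * x ^ p + C₂ * (r - x) ^ q) (Ioo 0 r) :=
    IntegrableOn.mono_set (((intervalIntegral.intervalIntegrable_rpow' hp).1.const_mul C₁).add
      ((intervalIntegrable_sub_rpow hq r 0 r).1.const_mul C₂)) Ioo_subset_Ioc_self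
  refine hdom.mono' ((continuousOn_betaWeight p q r).aestronglyMeasurable measurableSet_Ioo) <|
    (ae_restrict_iff' measurableSet_Ioo).2 (.of_forall fun x hx => ?_)
  have hxp : 0 ≤ x ^ p := Real.rpow_nonneg hx.1.le p
  have hxq : 0 ≤ (r - x) ^ q := Real.rpow_nonneg (sub_pos.2 hx.2).le q
  rw [betaWeight, Real.norm_of_nonneg (mul_nonneg hxp hxq)]
  rcases le_total x (r / 2) with h | h
  · have := (le_abs_self _).trans (hC₁ x ⟨hx.1.le, h⟩)
    nlinarith
  · have := (le_abs_self _).trans (hC₂ x ⟨h, hx.2.le⟩)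
    nlinarith

def region (s t : ℝ) : Set (ℝ × ℝ) := Ioo 0 s ×ˢ Ioo 0 t ∩ {z | z.1 + z.2 < 1}

lemma measurableSet_region (s t : ℝ) : MeasurableSet (region s t) :=
  (measurableSet_Ioo.prod measurableSet_Ioo).inter (measurableSet_lt (by fun_prop) (by fun_prop))

lemma region_cases {s t δ : ℝ} {z : ℝ × ℝ} (h2δ : 2 * δ ≤ s + t - 1) (hz : z ∈ region s t) :
    δ ≤ 1 - z.1 - z.2 ∨
      z.1 + z.2 ∈ Ioo (1 - δ) 1 ∧ z.1 ∈ Icc (1 - t - δ) (s - δ) ∨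
      z.1 + z.2 ∈ Ioo (1 - δ) 1 ∧ z.2 ∈ Icc (1 - s - δ) (t - δ) := by
  obtain ⟨⟨⟨-, hus⟩, -, hvt⟩, huv : z.1 + z.2 < 1⟩ := hz
  simp only [mem_Ioo, mem_Icc]
  by_cases hfar : δ ≤ 1 - z.1 - z.2
  · exact Or.inl hfar
  by_cases hu : z.1 ≤ s - δ
  · exact Or.inr (Or.inl ⟨⟨by linarith, huv⟩, by linarith, hu⟩)
  · exact Or.inr (Or.inr ⟨⟨by linarith, huv⟩, by linarith, by linarith⟩)

lemma norm_le_of_mem_region {w₁ w₂ : ℝ → ℝ} {e s t δ CE CA CB : ℝ} {z : ℝ × ℝ}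
    (h2δ : 2 * δ ≤ s + t - 1) (hCE0 : 0 ≤ CE) (hCA0 : 0 ≤ CA) (hCB0 : 0 ≤ CB)
    (hCE : ∀ x ∈ Icc δ 1, ‖x ^ (-e)‖ ≤ CE) (hCA : ∀ u ∈ Icc (1 - t - δ) (s - δ), ‖w₁ u‖ ≤ CA)
    (hCB : ∀ v ∈ Icc (1 - s - δ) (t - δ), ‖w₂ v‖ ≤ CB) (hz : z ∈ region s t) :
    ‖w₁ z.1 * (1 - z.1 - z.2) ^ (-e) * w₂ z.2‖ ≤
      CE * (‖w₁ z.1‖ * ‖w₂ z.2‖) + (CB * ‖w₁ z.1‖ + CA * ‖w₂ z.2‖) *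
        (Ioo (1 - δ) 1).indicator (fun x => (1 - x) ^ (-e)) (z.1 + z.2) := by
  set H := (Ioo (1 - δ) 1).indicator fun x => (1 - x) ^ (-e)
  have hE0 : 0 ≤ (1 - z.1 - z.2) ^ (-e) := Real.rpow_nonneg (by linarith [hz.2.out]) _
  have hH0 : 0 ≤ H (z.1 + z.2) :=
    indicator_nonneg (fun x hx => Real.rpow_nonneg (by linarith [hx.2]) _) _
  have hw₁ := norm_nonneg (w₁ z.1)
  have hw₂ := norm_nonneg (w₂ z.2)
  rw [norm_mul, norm_mul, Real.norm_of_nonneg hE0]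
  rcases region_cases h2δ hz with hfar | ⟨hnear, hu⟩ | ⟨hnear, hv⟩
  · have hE : (1 - z.1 - z.2) ^ (-e) ≤ CE :=
      (le_abs_self _).trans (hCE _ ⟨hfar, by linarith [hz.1.1.1, hz.1.2.1]⟩)
    have : ‖w₁ z.1‖ * (1 - z.1 - z.2) ^ (-e) * ‖w₂ z.2‖ ≤ CE * (‖w₁ z.1‖ * ‖w₂ z.2‖) := by
      rw [mul_right_comm, mul_comm CE]
      gcongr
    nlinarith [mul_nonneg (add_nonneg (mul_nonneg hCB0 hw₁) (mul_nonneg hCA0 hw₂)) hH0]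
  all_goals
    have hHz : H (z.1 + z.2) = (1 - z.1 - z.2) ^ (-e) := by
      simp only [H, indicator_of_mem hnear, sub_add_eq_sub_sub]
    rw [hHz]
  · have := hCA _ hu
    nlinarith [mul_nonneg hCE0 (mul_nonneg hw₁ hw₂), mul_nonneg hCB0 (mul_nonneg hw₁ hE0),
      mul_le_mul_of_nonneg_right this (mul_nonneg hE0 hw₂)]
  · have := hCB _ hv
    nlinarith [mul_nonneg hCE0 (mul_nonneg hw₁ hw₂), mul_nonneg hCA0 (mul_nonneg hw₂ hE0),
      mul_le_mul_of_nonneg_left this (mul_nonneg hw₁ hE0)]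

lemma integrableOn_region {w₁ w₂ : ℝ → ℝ} {e s t : ℝ} (he : e < 1) (hs : s < 1) (ht : t < 1)
    (hst : 1 < s + t) (hw₁ : IntegrableOn w₁ (Ioo 0 s)) (hw₁c : ContinuousOn w₁ (Ioo 0 s))
    (hw₂ : IntegrableOn w₂ (Ioo 0 t)) (hw₂c : ContinuousOn w₂ (Ioo 0 t)) :
    IntegrableOn (fun z : ℝ × ℝ => w₁ z.1 * (1 - z.1 - z.2) ^ (-e) * w₂ z.2) (region s t) := by
  obtain ⟨δ, hδ0, h2δ, hδs, hδt⟩ : ∃ δ, 0 < δ ∧ 2 * δ ≤ s + t - 1 ∧ δ < 1 - s ∧ δ < 1 - t := by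
    set m := min (s + t - 1) (min (1 - s) (1 - t))
    have hm : 0 < m := lt_min (by linarith) (lt_min (by linarith) (by linarith))
    have hm₀ : m ≤ s + t - 1 := min_le_left _ _
    have hm₁ : m ≤ 1 - s := (min_le_right _ _).trans (min_le_left _ _)
    have hm₂ : m ≤ 1 - t := (min_le_right _ _).trans (min_le_right _ _)
    exact ⟨m / 2, by linarith, by linarith, by linarith, by linarith⟩
  obtain ⟨CE, hCE0, hCE⟩ := isCompact_Icc.exists_nonneg_bound_of_continuousOn
    (ContinuousOn.rpow_const (f := fun x => x) (s := Icc δ 1) (p := -e) (by fun_prop)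
      fun x hx => Or.inl (by linarith [hx.1]))
  obtain ⟨CA, hCA0, hCA⟩ := isCompact_Icc.exists_nonneg_bound_of_continuousOn
    (hw₁c.mono (Icc_subset_Ioo (show 0 < 1 - t - δ by linarith) (show s - δ < s by linarith)))
  obtain ⟨CB, hCB0, hCB⟩ := isCompact_Icc.exists_nonneg_bound_of_continuousOn
    (hw₂c.mono (Icc_subset_Ioo (show 0 < 1 - s - δ by linarith) (show t - δ < t by linarith)))
  set A := (Ioo 0 s).indicator fun u => ‖w₁ u‖
  set B := (Ioo 0 t).indicator fun v => ‖w₂ v‖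
  set H := (Ioo (1 - δ) 1).indicator fun x => (1 - x) ^ (-e)
  have hA : Integrable A := (integrable_indicator_iff measurableSet_Ioo).2 hw₁.norm
  have hB : Integrable B := (integrable_indicator_iff measurableSet_Ioo).2 hw₂.norm
  have hH : Integrable H := (integrable_indicator_iff measurableSet_Ioo).2 <|
    (intervalIntegrable_sub_rpow (by linarith) 1 (1 - δ) 1).1.mono_set Ioo_subset_Ioc_self
  have hdom : Integrable (fun z : ℝ × ℝ => CE * (A z.1 * B z.2) + CB * (A z.1 * H (z.1 + z.2)) +
      CA * (H (z.1 + z.2) * B z.2)) (volume.prod volume) :=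
    (((hA.mul_prod hB).const_mul CE).add ((hA.mul_comp_add_left hH).const_mul CB)).add
      ((hB.mul_comp_add_right hH).const_mul CA)
  have hcont : ContinuousOn (fun z : ℝ × ℝ => w₁ z.1 * (1 - z.1 - z.2) ^ (-e) * w₂ z.2)
      (region s t) :=
    ((hw₁c.comp continuousOn_fst fun z hz => hz.1.1).mul
      (ContinuousOn.rpow_const (by fun_prop) fun z hz =>
        Or.inl (sub_pos.2 (lt_sub_iff_add_lt'.2 hz.2)).ne')).mul
      (hw₂c.comp continuousOn_snd fun z hz => hz.1.2)
  refine (Measure.volume_eq_prod ℝ ℝ ▸ hdom).integrableOn.mono'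
    (hcont.aestronglyMeasurable (measurableSet_region s t))
    ((ae_restrict_iff' (measurableSet_region s t)).2 (.of_forall fun z hz => ?_))
  have hAz : A z.1 = ‖w₁ z.1‖ := indicator_of_mem hz.1.1 _
  have hBz : B z.2 = ‖w₂ z.2‖ := indicator_of_mem hz.1.2 _
  refine (norm_le_of_mem_region h2δ hCE0 hCA0 hCB0 hCE hCA hCB hz).trans_eq ?_
  rw [hAz, hBz]
  ring

noncomputable def kernel (a b c d e s t : ℝ) (z : ℝ × ℝ) : ℝ :=
  betaWeight (a - 1) (c - 1) s z.1 * (1 - z.1 - z.2) ^ (-e) * betaWeight (b - 1) (d - 1) t z.2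

lemma integrableOn_kernel {a b c d e s t : ℝ} (ha : 0 < a) (hb : 0 < b) (hc : 0 < c)
    (hd : 0 < d) (he : e < 1) (hs : s < 1) (hst : 1 - s < t) (ht : t < 1) :
    IntegrableOn (kernel a b c d e s t) (region s t) :=
  integrableOn_region he hs ht (by linarith)
    (integrableOn_betaWeight (by linarith) (by linarith)) (continuousOn_betaWeight _ _ _)
    (integrableOn_betaWeight (by linarith) (by linarith)) (continuousOn_betaWeight _ _ _)

lemma kernel_swap (a b c d e s t : ℝ) (z : ℝ × ℝ) :
    kernel b a d c e t s z.swap = kernel a b c d e s t z := by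
  simp only [kernel, Prod.fst_swap, Prod.snd_swap, sub_right_comm 1 z.2 z.1]
  ring

lemma swap_mem_region {s t : ℝ} {z : ℝ × ℝ} : z.swap ∈ region t s ↔ z ∈ region s t := by
  simp only [region, mem_inter_iff, mem_prod, Prod.fst_swap, Prod.snd_swap, mem_ofPred_eq,
    add_comm z.2 z.1, and_comm (a := z.2 ∈ Ioo 0 t)]

lemma setIntegral_kernel_swap (a b c d e s t : ℝ) :
    ∫ z in region t s, kernel b a d c e t s z = ∫ z in region s t, kernel a b c d e s t z := by
  rw [← MeasureTheory.integral_indicator (measurableSet_region t s),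
    ← MeasureTheory.integral_indicator (measurableSet_region s t),
    Measure.volume_eq_prod, ← integral_prod_swap]
  congr 1
  ext z
  by_cases hz : z ∈ region s t
  · rw [indicator_of_mem (swap_mem_region.2 hz), indicator_of_mem hz, kernel_swap]
  · rw [indicator_of_notMem (mt swap_mem_region.1 hz), indicator_of_notMem hz]

lemma indicator_region_apply {f : ℝ × ℝ → ℝ} {s t u v : ℝ} (hv : v ∈ Ioo 0 t) :
    (region s t).indicator f (u, v) = (Ioo 0 (min s (1 - v))).indicator (fun u => f (u, v)) u := by
  have : (u, v) ∈ region s t ↔ u ∈ Ioo 0 (min s (1 - v)) := by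
    simp only [region, mem_inter_iff, mem_prod, mem_Ioo, mem_ofPred_eq, lt_min_iff, hv.1, hv.2,
      and_true, lt_sub_iff_add_lt]
    tauto
  by_cases h : u ∈ Ioo 0 (min s (1 - v))
  · rw [indicator_of_mem h, indicator_of_mem (this.2 h)]
  · rw [indicator_of_notMem h, indicator_of_notMem (mt this.1 h)]

lemma integral_indicator_kernel_slice {a b c d e s t v : ℝ} (hs : 0 < s) (hv : v ∈ Ioo 0 t)
    (hv1 : v < 1) :
    ∫ u, (region s t).indicator (kernel a b c d e s t) (u, v) =
      (∫ u in (0 : ℝ)..min s (1 - v), u ^ (a - 1) * (s - u) ^ (c - 1) * (1 - u - v) ^ (-e)) *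
        v ^ (b - 1) * (t - v) ^ (d - 1) := by
  simp_rw [indicator_region_apply hv]
  rw [MeasureTheory.integral_indicator measurableSet_Ioo,
    intervalIntegral.integral_of_le (le_min hs.le (by linarith)), integral_Ioc_eq_integral_Ioo,
    mul_assoc, ← MeasureTheory.integral_mul_const]
  rfl

lemma I5_add_I6_eq_setIntegral_kernel {a b c d e s t : ℝ} (hs0 : 0 < s) (hs1 : s < 1)
    (hst : 1 - s < t) (ht1 : t < 1) (hK : IntegrableOn (kernel a b c d e s t) (region s t)) :
    I5 a b c d e s t + I6 a b c d e s t = ∫ z in region s t, kernel a b c d e s t z := by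
  have hint : Integrable ((region s t).indicator (kernel a b c d e s t)) (volume.prod volume) :=
    Measure.volume_eq_prod ℝ ℝ ▸ (integrable_indicator_iff (measurableSet_region s t)).2 hK
  set F := fun v => ∫ u, (region s t).indicator (kernel a b c d e s t) (u, v)
  have hF : Integrable F := hint.integral_prod_right
  have hF0 : ∀ v ∉ Ioo 0 t, F v = 0 := fun v hv =>
    integral_eq_zero_of_ae (.of_forall fun u => indicator_of_notMem (fun hz => hv hz.1.2) _)
  rw [← MeasureTheory.integral_indicator (measurableSet_region s t), Measure.volume_eq_prod,
    integral_prod_symm _ hint, ← setIntegral_eq_integral_of_forall_compl_eq_zero hF0,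
    ← Ioc_union_Ioo_eq_Ioo (by linarith) hst,
    setIntegral_union (Ioc_disjoint_Ioi_same.mono_right Ioo_subset_Ioi_self) measurableSet_Ioo
      hF.integrableOn hF.integrableOn]
  congr 1
  · rw [I5, intervalIntegral.integral_of_le (by linarith)]
    refine setIntegral_congr_fun measurableSet_Ioc fun v hv => ?_
    refine ((integral_indicator_kernel_slice hs0 ⟨hv.1, by linarith [hv.2]⟩
      (by linarith [hv.2])).trans ?_).symm
    rw [min_eq_left (by linarith [hv.2])]
  · rw [I6, intervalIntegral.integral_of_le hst.le, integral_Ioc_eq_integral_Ioo]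
    refine setIntegral_congr_fun measurableSet_Ioo fun v hv => ?_
    refine ((integral_indicator_kernel_slice hs0 ⟨by linarith [hv.1], hv.2⟩
      (by linarith [hv.2])).trans ?_).symm
    rw [min_eq_right (by linarith [hv.1])]

/-- The sum `I₅ + I₆` is invariant under simultaneously interchanging
`a ↔ b`, `c ↔ d` and `s ↔ t`. -/
theorem stmt18 (a b c d e : ℝ) (ha : 0 < a) (hb : 0 < b) (hc : 0 < c) (hd : 0 < d)
    (he : e < 1)
    (s t : ℝ) (hs0 : 0 < s) (hs1 : s < 1) (ht0 : 1 - s < t) (ht1 : t < 1) :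
    I5 a b c d e s t + I6 a b c d e s t = I5 b a d c e t s + I6 b a d c e t s := by
  have ht : 0 < t := by linarith
  have hs : 1 - t < s := by linarith
  rw [I5_add_I6_eq_setIntegral_kernel hs0 hs1 ht0 ht1
      (integrableOn_kernel ha hb hc hd he hs1 ht0 ht1),
    I5_add_I6_eq_setIntegral_kernel ht ht1 hs hs1 (integrableOn_kernel hb ha hd hc he ht1 hs hs1),
    setIntegral_kernel_swap]
end
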